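/- If (W,H) is a global minimizer of the regularized objective f, then within-group collapse holds: for every multiplicity m ∈ {1,…,M}, every S ⊆ [K] with |S| = m, and all sample indices i, i' ∈ {1,…,r_{m,S}}, we have h_{m,S,i} = h_{m,S,i'}; i.e., all features sharing the same label set collapse to a single common vector h_{m,S}. -/
import Mathlib


open Finset

/-- Softmax probability of coordinate `k` for logits `z ∈ ℝ^K`. -/
noncomputable def softmax {K : ℕ} (z : Fin K → ℝ) (k : Fin K) : ℝ :=
  Real.exp (z k) / ∑ j, Real.exp (z j)

/-- Pick-all-labels (PAL) loss: `L_PAL(z,S) = ∑_{k∈S} -log(softmax(z)_k)`. -/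
noncomputable def palLoss {K : ℕ} (z : Fin K → ℝ) (S : Finset (Fin K)) : ℝ :=
  ∑ k ∈ S, -Real.log (softmax z k)

/-- The family of label sets `S ⊆ [K]` with `|S| = m`. -/
def msets (K m : ℕ) : Finset (Finset (Fin K)) := Finset.univ.powersetCard m

/-- Total sample count `N = ∑_{m=1}^M ∑_{|S|=m} r_{m,S}`. -/
def totalN (K M : ℕ) (r : ℕ → Finset (Fin K) → ℕ) : ℕ :=
  ∑ m ∈ Finset.Icc 1 M, ∑ S ∈ msets K m, r m S

/-- Empirical PAL risk `g(WH)`. -/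
noncomputable def empRisk (K d M : ℕ) (r : ℕ → Finset (Fin K) → ℕ)
    (W : Fin K → Fin d → ℝ) (h : ℕ → Finset (Fin K) → ℕ → Fin d → ℝ) : ℝ :=
  (1 / (totalN K M r : ℝ)) *
    ∑ m ∈ Finset.Icc 1 M, ∑ S ∈ msets K m, ∑ i ∈ Finset.range (r m S),
      palLoss (fun k => ∑ t, W k t * h m S i t) S

/-- Squared Frobenius norm `‖W‖_F²`. -/
noncomputable def wNormSq (K d : ℕ) (W : Fin K → Fin d → ℝ) : ℝ :=
  ∑ k, ∑ t, (W k t) ^ 2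

/-- Squared feature norm `‖H‖_F² = ∑_{m,S,i} ‖h_{m,S,i}‖²`. -/
noncomputable def hNormSq (K d M : ℕ) (r : ℕ → Finset (Fin K) → ℕ)
    (h : ℕ → Finset (Fin K) → ℕ → Fin d → ℝ) : ℝ :=
  ∑ m ∈ Finset.Icc 1 M, ∑ S ∈ msets K m, ∑ i ∈ Finset.range (r m S), ∑ t, (h m S i t) ^ 2

/-- Regularized objective `f(W,H) = g(WH) + (λ_W/2)‖W‖_F² + (λ_H/2)‖H‖_F²`. -/
noncomputable def objective (K d M : ℕ) (r : ℕ → Finset (Fin K) → ℕ) (lW lH : ℝ)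
    (W : Fin K → Fin d → ℝ) (h : ℕ → Finset (Fin K) → ℕ → Fin d → ℝ) : ℝ :=
  empRisk K d M r W h + lW / 2 * wNormSq K d W + lH / 2 * hNormSq K d M r h

/-- The pick-all-labels loss rewritten as `|S|·logsumexp(z) − ∑_{k∈S} z_k`. -/
lemma palLoss_eq {K : ℕ} (hK : 0 < K) (z : Fin K → ℝ) (S : Finset (Fin K)) :
    palLoss z S = S.card * Real.log (∑ j, Real.exp (z j)) - ∑ k ∈ S, z k := by
  have hpos : 0 < ∑ j, Real.exp (z j) :=
    Finset.sum_pos (fun _ _ => Real.exp_pos _) ⟨⟨0, hK⟩, Finset.mem_univ _⟩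
  unfold palLoss softmax
  calc ∑ k ∈ S, -Real.log (Real.exp (z k) / ∑ j, Real.exp (z j))
      = ∑ k ∈ S, (Real.log (∑ j, Real.exp (z j)) - z k) := by
        refine Finset.sum_congr rfl fun k _ => ?_
        rw [Real.log_div (Real.exp_ne_zero _) hpos.ne', Real.log_exp]; ring
    _ = _ := by rw [Finset.sum_sub_distrib, Finset.sum_const, nsmul_eq_mul]

/-- Midpoint convexity of log-sum-exp, via Cauchy–Schwarz. -/
lemma lse_mid {K : ℕ} (hK : 0 < K) (a b : Fin K → ℝ) :
    Real.log (∑ j, Real.exp ((a j + b j) / 2)) ≤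
      (Real.log (∑ j, Real.exp (a j)) + Real.log (∑ j, Real.exp (b j))) / 2 := by
  have hA : 0 < ∑ j, Real.exp (a j) :=
    Finset.sum_pos (fun _ _ => Real.exp_pos _) ⟨⟨0, hK⟩, Finset.mem_univ _⟩
  have hB : 0 < ∑ j, Real.exp (b j) :=
    Finset.sum_pos (fun _ _ => Real.exp_pos _) ⟨⟨0, hK⟩, Finset.mem_univ _⟩
  have hC : 0 < ∑ j, Real.exp ((a j + b j) / 2) :=
    Finset.sum_pos (fun _ _ => Real.exp_pos _) ⟨⟨0, hK⟩, Finset.mem_univ _⟩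
  have key : (∑ j, Real.exp ((a j + b j) / 2)) ^ 2 ≤
      (∑ j, Real.exp (a j)) * ∑ j, Real.exp (b j) := by
    have := Finset.sum_mul_sq_le_sq_mul_sq Finset.univ
      (fun j => Real.exp (a j / 2)) (fun j => Real.exp (b j / 2))
    have e1 : ∀ j : Fin K, Real.exp (a j / 2) * Real.exp (b j / 2)
        = Real.exp ((a j + b j) / 2) := by
      intro j; rw [← Real.exp_add]; ring_nf
    have e2 : ∀ j : Fin K, Real.exp (a j / 2) ^ 2 = Real.exp (a j) := by
      intro j; rw [sq, ← Real.exp_add]; ring_nf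
    have e3 : ∀ j : Fin K, Real.exp (b j / 2) ^ 2 = Real.exp (b j) := by
      intro j; rw [sq, ← Real.exp_add]; ring_nf
    simpa only [e1, e2, e3] using this
  have hlog := Real.log_le_log (by positivity) key
  rw [Real.log_pow, Real.log_mul hA.ne' hB.ne'] at hlog
  push_cast at hlog
  linarith

/-- Midpoint convexity of the PAL loss. -/
lemma palLoss_mid {K : ℕ} (hK : 0 < K) (za zb : Fin K → ℝ) (S : Finset (Fin K)) :
    palLoss (fun k => (za k + zb k) / 2) S ≤ (palLoss za S + palLoss zb S) / 2 := by
  rw [palLoss_eq hK, palLoss_eq hK, palLoss_eq hK]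
  have h1 := lse_mid hK za zb
  have h2 : ∑ k ∈ S, (za k + zb k) / 2 = ((∑ k ∈ S, za k) + ∑ k ∈ S, zb k) / 2 := by
    rw [← Finset.sum_add_distrib, Finset.sum_div]
  have h3 : (0 : ℝ) ≤ S.card := Nat.cast_nonneg _
  have h4 := mul_le_mul_of_nonneg_left h1 h3
  rw [h2]
  linarith

/-- At any global minimizer `(W,H)` of the regularized objective `f`,
within-group collapse holds: for every multiplicity `m ∈ {1,…,M}`, every `S ⊆ [K]`
with `|S| = m`, and all sample indices `i, i'` in `{1,…,r_{m,S}}`,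
the features coincide: `h_{m,S,i} = h_{m,S,i'}`. -/
theorem within_group_collapse_at_global_min {K d M : ℕ} (hK : 2 ≤ K) (hd : 1 ≤ d)
    (hM1 : 1 ≤ M) (hMK : M ≤ K - 1)
    (r : ℕ → Finset (Fin K) → ℕ) (hN : 0 < totalN K M r)
    (lW lH : ℝ) (hlW : 0 < lW) (hlH : 0 < lH)
    (W : Fin K → Fin d → ℝ) (h : ℕ → Finset (Fin K) → ℕ → Fin d → ℝ)
    (hmin : ∀ (W' : Fin K → Fin d → ℝ) (h' : ℕ → Finset (Fin K) → ℕ → Fin d → ℝ),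
      objective K d M r lW lH W h ≤ objective K d M r lW lH W' h') :
    ∀ m ∈ Finset.Icc 1 M, ∀ S ∈ msets K m, ∀ i i' : ℕ,
      i < r m S → i' < r m S → h m S i = h m S i' := by
  intro m hm S hS i i' hi hi'
  by_contra hne
  have hii' : i ≠ i' := by rintro rfl; exact hne rfl
  have hK0 : 0 < K := by omega
  set a : Fin d → ℝ := h m S i with ha
  set b : Fin d → ℝ := h m S i' with hb
  set c : Fin d → ℝ := fun t => (a t + b t) / 2 with hc
  set h' : ℕ → Finset (Fin K) → ℕ → Fin d → ℝ :=
    fun m' S' j => if m' = m ∧ S' = S ∧ (j = i ∨ j = i') then c else h m' S' j with hh'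
  -- the perturbed triple sum of any functional differs only at the two modified points
  have key : ∀ F : ℕ → Finset (Fin K) → (Fin d → ℝ) → ℝ,
      (∑ m' ∈ Finset.Icc 1 M, ∑ S' ∈ msets K m', ∑ j ∈ Finset.range (r m' S'),
        F m' S' (h' m' S' j))
      = (∑ m' ∈ Finset.Icc 1 M, ∑ S' ∈ msets K m', ∑ j ∈ Finset.range (r m' S'),
        F m' S' (h m' S' j))
        + ((F m S c - F m S a) + (F m S c - F m S b)) := by
    intro F
    have hdiff : (∑ m' ∈ Finset.Icc 1 M, ∑ S' ∈ msets K m', ∑ j ∈ Finset.range (r m' S'),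
          (F m' S' (h' m' S' j) - F m' S' (h m' S' j)))
        = (F m S c - F m S a) + (F m S c - F m S b) := by
      rw [Finset.sum_eq_single_of_mem m hm (fun m' _ hm' => by
        refine Finset.sum_eq_zero fun S' _ => Finset.sum_eq_zero fun j _ => ?_
        simp [hh', hm'])]
      rw [Finset.sum_eq_single_of_mem S hS (fun S' _ hS' => by
        refine Finset.sum_eq_zero fun j _ => ?_
        simp [hh', hS'])]
      have hsub : ({i, i'} : Finset ℕ) ⊆ Finset.range (r m S) := by
        intro j hj
        simp only [Finset.mem_insert, Finset.mem_singleton] at hj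
        rcases hj with rfl | rfl <;> simp [Finset.mem_range, hi, hi']
      rw [← Finset.sum_subset hsub (fun j _ hj => by
        simp only [Finset.mem_insert, Finset.mem_singleton, not_or] at hj
        simp [hh', hj.1, hj.2])]
      rw [Finset.sum_pair hii']
      simp [hh', hii', ← ha, ← hb]
    have expand : (∑ m' ∈ Finset.Icc 1 M, ∑ S' ∈ msets K m', ∑ j ∈ Finset.range (r m' S'),
          (F m' S' (h' m' S' j) - F m' S' (h m' S' j)))
        = (∑ m' ∈ Finset.Icc 1 M, ∑ S' ∈ msets K m', ∑ j ∈ Finset.range (r m' S'),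
            F m' S' (h' m' S' j))
          - (∑ m' ∈ Finset.Icc 1 M, ∑ S' ∈ msets K m', ∑ j ∈ Finset.range (r m' S'),
            F m' S' (h m' S' j)) := by
      simp [Finset.sum_sub_distrib]
    linarith [hdiff, expand.symm.trans hdiff]
  -- PAL loss part decreases (weakly)
  have hpal : (palLoss (fun k => ∑ t, W k t * c t) S - palLoss (fun k => ∑ t, W k t * a t) S)
      + (palLoss (fun k => ∑ t, W k t * c t) S - palLoss (fun k => ∑ t, W k t * b t) S)
      ≤ 0 := by
    have hmidz : (fun k => ∑ t, W k t * c t)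
        = fun k => ((∑ t, W k t * a t) + (∑ t, W k t * b t)) / 2 := by
      funext k
      rw [← Finset.sum_add_distrib, Finset.sum_div]
      refine Finset.sum_congr rfl fun t _ => ?_
      simp only [hc]; ring
    have := palLoss_mid hK0 (fun k => ∑ t, W k t * a t) (fun k => ∑ t, W k t * b t) S
    rw [hmidz]
    linarith
  -- norm part decreases strictly
  have hnorm : ((∑ t, c t ^ 2) - ∑ t, a t ^ 2) + ((∑ t, c t ^ 2) - ∑ t, b t ^ 2) < 0 := by
    have hex : ∃ t : Fin d, a t ≠ b t := by
      by_contra hno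
      push_neg at hno
      exact hne (funext hno)
    obtain ⟨t0, ht0⟩ := hex
    have hpos : 0 < ∑ t, (a t - b t) ^ 2 :=
      Finset.sum_pos' (fun t _ => sq_nonneg _)
        ⟨t0, Finset.mem_univ _, by have := sub_ne_zero.mpr ht0; positivity⟩
    have e : ((∑ t, c t ^ 2) - ∑ t, a t ^ 2) + ((∑ t, c t ^ 2) - ∑ t, b t ^ 2)
        = -(∑ t, (a t - b t) ^ 2) / 2 := by
      have : ∀ x ∈ (Finset.univ : Finset (Fin d)),
          c x ^ 2 - a x ^ 2 + (c x ^ 2 - b x ^ 2) = -((a x - b x) ^ 2) / 2 := by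
        intro x _; simp only [hc]; ring
      calc ((∑ t, c t ^ 2) - ∑ t, a t ^ 2) + ((∑ t, c t ^ 2) - ∑ t, b t ^ 2)
          = ∑ t, (c t ^ 2 - a t ^ 2 + (c t ^ 2 - b t ^ 2)) := by
            simp [Finset.sum_add_distrib, Finset.sum_sub_distrib]
        _ = ∑ t, (-((a t - b t) ^ 2) / 2) := Finset.sum_congr rfl this
        _ = -(∑ t, (a t - b t) ^ 2) / 2 := by
            rw [← Finset.sum_div, ← Finset.sum_neg_distrib]
    rw [e]
    linarith
  -- assemble the objective comparison
  have hNpos : (0 : ℝ) < (totalN K M r : ℝ) := by exact_mod_cast hN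
  have hobj : objective K d M r lW lH W h' < objective K d M r lW lH W h := by
    unfold objective empRisk hNormSq
    rw [key (fun m' S' x => palLoss (fun k => ∑ t, W k t * x t) S'),
        key (fun _ _ x => ∑ t, x t ^ 2)]
    have h1 : (1 / (totalN K M r : ℝ)) ≥ 0 := by positivity
    have hemp : (1 / (totalN K M r : ℝ)) *
        ((palLoss (fun k => ∑ t, W k t * c t) S - palLoss (fun k => ∑ t, W k t * a t) S)
        + (palLoss (fun k => ∑ t, W k t * c t) S - palLoss (fun k => ∑ t, W k t * b t) S))
        ≤ 0 := mul_nonpos_of_nonneg_of_nonpos h1 hpal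
    have hh : lH / 2 * (((∑ t, c t ^ 2) - ∑ t, a t ^ 2)
        + ((∑ t, c t ^ 2) - ∑ t, b t ^ 2)) < 0 :=
      mul_neg_of_pos_of_neg (by positivity) hnorm
    nlinarith [hemp, hh]
  exact absurd (hmin W h') (not_le.mpr hobj)
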